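/- With Ω, f, u as above, the function G(z) = u(z) + log|z| is the Green's function of Ω with pole at 0; that is, G is harmonic on Ω \ {0}, G(z) + log|z| is harmonic near 0 (i.e., G(z) = −log|z| + harmonic), G > 0 on Ω \ {0}, and G extends continuously to 0 on the boundary. -/

import Mathlib

/-!
On `Ω` we have `G = -log ‖f‖`, and `-log ‖g‖` is harmonic wherever `g` is holomorphic and
nonvanishing, being locally the real part of a branch of `-log g`. Writing `f z = z · g z` with
`g = dslope f 0`, injectivity of `f` and `f' 0 ≠ 0` make `g` nonvanishing near `0`, so there
`G = -log ‖z‖ - log ‖g‖`. Positivity is `‖f‖ < 1`, and the boundary limit is `‖f‖ → 1`.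
-/

open Complex Metric Set Filter Topology

/-- A real function is harmonic on an (open) set if near each point it is the real
part of a holomorphic function. -/
def HarmonicOn (u : ℂ → ℝ) (s : Set ℂ) : Prop :=
  ∀ z ∈ s, ∃ r > 0, Metric.ball z r ⊆ s ∧ ∃ F : ℂ → ℂ,
    DifferentiableOn ℂ F (Metric.ball z r) ∧ ∀ w ∈ Metric.ball z r, u w = (F w).re

theorem HarmonicOn.congr {u v : ℂ → ℝ} {s : Set ℂ} (hu : HarmonicOn u s) (huv : EqOn u v s) :
    HarmonicOn v s := by
  intro z hz
  obtain ⟨r, hr, hball, F, hF, hre⟩ := hu z hz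
  exact ⟨r, hr, hball, F, hF, fun w hw => (huv (hball hw)).symm.trans (hre w hw)⟩

theorem harmonicOn_neg_log_norm {s : Set ℂ} (hs : IsOpen s) {g : ℂ → ℂ}
    (hg : DifferentiableOn ℂ g s) (hne : ∀ z ∈ s, g z ≠ 0) :
    HarmonicOn (fun z => -Real.log ‖g z‖) s := by
  intro z hz
  have hgz := hne z hz
  have hquot : ContinuousAt (fun w => g w / g z) z :=
    (hg.continuousOn.continuousAt (hs.mem_nhds hz)).div_const _
  have hslit : (fun w => g w / g z) ⁻¹' slitPlane ∈ 𝓝 z :=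
    hquot.preimage_mem_nhds (by simpa [hgz] using isOpen_slitPlane.mem_nhds one_mem_slitPlane)
  obtain ⟨r, hr, hball⟩ := Metric.mem_nhds_iff.mp (inter_mem (hs.mem_nhds hz) hslit)
  refine ⟨r, hr, fun w hw => (hball hw).1,
    fun w => -log (g w / g z) - (Real.log ‖g z‖ : ℂ), fun w hw => ?_, fun w hw => ?_⟩
  · obtain ⟨hws, hwslit⟩ := hball hw
    exact (((differentiableAt_log hwslit).comp w
      ((hg.differentiableAt (hs.mem_nhds hws)).div_const _)).neg.sub_const _).differentiableWithinAt
  · have hgw := hne w (hball hw).1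
    simp only [sub_re, neg_re, log_re, norm_div, ofReal_re,
      Real.log_div (norm_ne_zero_iff.2 hgw) (norm_ne_zero_iff.2 hgz)]
    ring

theorem dslope_ne_zero_of_injOn {𝕜 : Type*} [NontriviallyNormedField 𝕜] {f : 𝕜 → 𝕜}
    {s : Set 𝕜} (hinj : InjOn f s) {a z : 𝕜} (ha : a ∈ s) (hz : z ∈ s) (hf' : deriv f a ≠ 0) :
    dslope f a z ≠ 0 := by
  rcases eq_or_ne z a with rfl | hza
  · rwa [dslope_same]
  · rw [dslope_of_ne _ hza, slope_def_field]
    exact div_ne_zero (sub_ne_zero.2 fun h => hza (hinj hz ha h)) (sub_ne_zero.2 hza)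

theorem neg_log_norm_eq_add_neg_log_norm_dslope {f : ℂ → ℂ} (hf0 : f 0 = 0) {z : ℂ}
    (hz : z ≠ 0) (hg : dslope f 0 z ≠ 0) :
    -Real.log ‖f z‖ = -Real.log ‖z‖ + -Real.log ‖dslope f 0 z‖ := by
  have hfactor : f z = z * dslope f 0 z := by
    simpa [hf0] using (sub_smul_dslope f 0 z).symm
  rw [hfactor, norm_mul, Real.log_mul (norm_ne_zero_iff.2 hz) (norm_ne_zero_iff.2 hg)]
  ring

theorem tendsto_neg_log_norm_nhdsWithin {f : ℂ → ℂ} {s : Set ℂ} {z : ℂ}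
    (hf : ContinuousWithinAt f s z) (hz : ‖f z‖ = 1) :
    Tendsto (fun w => -Real.log ‖f w‖) (𝓝[s] z) (𝓝 0) := by
  simpa [hz] using (hf.norm.log (by simp [hz])).tendsto.neg

theorem stmt2_general (Ω : Set ℂ) (hΩopen : IsOpen Ω)
    (hΩ0 : (0:ℂ) ∈ Ω)
    (f : ℂ → ℂ) (hf : DifferentiableOn ℂ f Ω)
    (hbij : Set.BijOn f Ω (ball (0:ℂ) 1))
    (hf0 : f 0 = 0) (hderiv : (deriv f 0).im = 0 ∧ 0 < (deriv f 0).re)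
    (hext : ContinuousOn f (closure Ω) ∧ ∀ z ∈ frontier Ω, ‖f z‖ = 1)
    (G : ℂ → ℝ) (hG : ∀ z ∈ closure Ω, G z = -Real.log (‖f z‖)) :
    HarmonicOn G (Ω \ {0}) ∧
    (∃ r > 0, Metric.ball (0:ℂ) r ⊆ Ω ∧
      HarmonicOn (fun z => G z + Real.log (‖z‖)) (Metric.ball (0:ℂ) r \ {0}) ∧
      ∃ h : ℂ → ℝ, HarmonicOn h (Metric.ball (0:ℂ) r) ∧
        ∀ z ∈ Metric.ball (0:ℂ) r \ {0}, G z = -Real.log (‖z‖) + h z) ∧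
    (∀ z ∈ Ω \ {0}, 0 < G z) ∧
    (∀ z ∈ frontier Ω, Filter.Tendsto G (nhdsWithin z Ω) (nhds 0)) := by
  have hGΩ : EqOn (fun z => -Real.log ‖f z‖) G Ω := fun z hz => (hG z (subset_closure hz)).symm
  have hfne : ∀ z ∈ Ω \ {0}, f z ≠ 0 := fun z hz h =>
    hz.2 (hbij.injOn hz.1 hΩ0 (h.trans hf0.symm))
  obtain ⟨r, hr, hball⟩ := Metric.isOpen_iff.mp hΩopen 0 hΩ0
  have hdslope : DifferentiableOn ℂ (dslope f 0) (ball 0 r) :=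
    (differentiableOn_dslope (ball_mem_nhds 0 hr)).mpr (hf.mono hball)
  have hdslope_ne : ∀ z ∈ ball (0:ℂ) r, dslope f 0 z ≠ 0 := fun z hz =>
    dslope_ne_zero_of_injOn hbij.injOn hΩ0 (hball hz) fun h => by simp [h] at hderiv
  have hsplit : ∀ z ∈ ball (0:ℂ) r \ {0}, G z = -Real.log ‖z‖ + -Real.log ‖dslope f 0 z‖ :=
    fun z hz => (hGΩ (hball hz.1)).symm.trans
      (neg_log_norm_eq_add_neg_log_norm_dslope hf0 hz.2 (hdslope_ne z hz.1))
  refine ⟨(harmonicOn_neg_log_norm (hΩopen.sdiff isClosed_singleton) (hf.mono sdiff_subset)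
      hfne).congr (hGΩ.mono sdiff_subset), ⟨r, hr, hball, ?_, _,
      harmonicOn_neg_log_norm isOpen_ball hdslope hdslope_ne, hsplit⟩, fun z hz => ?_,
      fun z hz => ?_⟩
  · refine (harmonicOn_neg_log_norm (isOpen_ball.sdiff isClosed_singleton)
      (hdslope.mono sdiff_subset) fun z hz => hdslope_ne z hz.1).congr fun z hz => ?_
    simp only [hsplit z hz]
    ring
  · rw [← hGΩ hz.1]
    exact neg_pos.2 (Real.log_neg (norm_pos_iff.2 (hfne z hz))
      (mem_ball_zero_iff.1 (hbij.mapsTo hz.1)))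
  · refine (tendsto_neg_log_norm_nhdsWithin
      ((hext.1 z (frontier_subset_closure hz)).mono subset_closure) (hext.2 z hz)).congr' ?_
    filter_upwards [self_mem_nhdsWithin] with w hw using hGΩ hw

/-- For the normalized Riemann map `f` of a bounded Jordan domain
`Ω ∋ 0` (so `G z = u z + log|z| = -log |f z|`), `G` is the Green's function of `Ω`
with pole at `0`: `G` is harmonic on `Ω \ {0}`, `G z + log|z|` is harmonic near `0`,
`G > 0` on `Ω \ {0}`, and `G` extends continuously to `0` on the boundary. -/
theorem stmt2 (Ω : Set ℂ) (hΩopen : IsOpen Ω) (hΩbdd : Bornology.IsBounded Ω)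
    (hΩ0 : (0:ℂ) ∈ Ω)
    (hJordan : ∃ γ : Metric.sphere (0:ℂ) 1 → ℂ, Continuous γ ∧
      Function.Injective γ ∧ Set.range γ = frontier Ω)
    (f : ℂ → ℂ) (hf : DifferentiableOn ℂ f Ω)
    (hbij : Set.BijOn f Ω (ball (0:ℂ) 1))
    (hf0 : f 0 = 0) (hderiv : (deriv f 0).im = 0 ∧ 0 < (deriv f 0).re)
    (hext : ContinuousOn f (closure Ω) ∧ ∀ z ∈ frontier Ω, ‖f z‖ = 1)
    (G : ℂ → ℝ) (hG : ∀ z ∈ closure Ω, G z = -Real.log (‖f z‖)) :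
    HarmonicOn G (Ω \ {0}) ∧
    (∃ r > 0, Metric.ball (0:ℂ) r ⊆ Ω ∧
      HarmonicOn (fun z => G z + Real.log (‖z‖)) (Metric.ball (0:ℂ) r \ {0}) ∧
      ∃ h : ℂ → ℝ, HarmonicOn h (Metric.ball (0:ℂ) r) ∧
        ∀ z ∈ Metric.ball (0:ℂ) r \ {0}, G z = -Real.log (‖z‖) + h z) ∧
    (∀ z ∈ Ω \ {0}, 0 < G z) ∧
    (∀ z ∈ frontier Ω, Filter.Tendsto G (nhdsWithin z Ω) (nhds 0)) :=
  stmt2_general Ω hΩopen hΩ0 f hf hbij hf0 hderiv hext G hG
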